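/- Let π^b be a baseline DTR. Define π↑ recursively by π↑_K(h⃗_K) ∈ argmax_{a ∈ {−1,+1}} Q^{π↑/π^b}_K(h⃗_K, a) and, for k = K−1,…,1, π↑_k(h⃗_k) ∈ argmax_{a ∈ {−1,+1}} Q^{π↑/π^b}_k(h⃗_k, a) (well-defined since Q^{π↑/π^b}_k depends on π↑ only through π↑_{(k+1):K}). Then for every stage k ∈ {1,…,K}, every history h⃗_k ∈ 𝓗_k, and every DTR π, V^{π↑/π^b}_k(h⃗_k) ≥ V^{π/π^b}_k(h⃗_k); that is, V^{π↑/π^b}_k(h⃗_k) = max over all DTRs π of V^{π/π^b}_k(h⃗_k). (Theorem 2: dynamic programming for the IV-improved DTR.) -/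

import Mathlib

open MeasureTheory

noncomputable section

open Classical in
/-- Real-valued indicator `1{p}` of a proposition. -/
noncomputable def ind (p : Prop) : ℝ := if p then 1 else 0

/-- Sign function: `+1` for positive, `−1` for negative, `0` at zero. -/
noncomputable def sgn (c : ℝ) : ℝ := if 0 < c then 1 else if c < 0 then -1 else 0

section DTR

/- Multi-stage setup: histories `H k` for stage indices `k = 0, …, K-1`
(stage `k+1` of the paper); `H K` is the terminal (post-trajectory) type.
New covariates arising after stage `k` live in `X (k+1)`, and
`concat k h a r x` is the concatenated history `(h⃗_k, a_k, r_k, x_{k+1})`.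
`P k h a` is the IV-constrained set of joint laws of `(R_k, X_{k+1})`.
At the last stage the new covariate is a null quantity that is simply ignored
(the terminal value function is identically `0`, so the stage-`K` formulas of the
paper are recovered). -/
variable (X : ℕ → Type) [∀ k, MeasurableSpace (X k)]
variable (H : ℕ → Type)
variable (concat : ∀ k, H k → ℝ → ℝ → X (k + 1) → H (k + 1))
variable (P : ∀ k, H k → ℝ → Set (Measure (ℝ × X (k + 1))))

open Classical in
/-- Relative value function of `π` with respect to the baseline `πb`, by backward induction
with `fuel` stages to go.  Writing `a'_k = π^b_k(h⃗_k)`: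
if `π_k(h⃗_k) = a'_k` it is `inf_{p ∈ 𝒫_{h⃗_k,a'_k}} ∫ V^{π/π^b}_{k+1}(h⃗_k,a'_k,r,x) dp`,
otherwise it is
`inf_{p ∈ 𝒫_{h⃗_k,−a'_k}} ∫ [r + V^{π/π^b}_{k+1}(h⃗_k,−a'_k,r,x)] dp − sup_{p' ∈ 𝒫_{h⃗_k,a'_k}} ∫ r dp'`. -/
noncomputable def rVal (πb π : ∀ k, H k → ℝ) : (fuel : ℕ) → (k : ℕ) → H k → ℝ
  | 0, _, _ => 0
  | fuel + 1, k, h =>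
      if π k h = πb k h then
        sInf ((fun p : Measure (ℝ × X (k + 1)) =>
            ∫ q, rVal πb π fuel (k + 1) (concat k h (πb k h) q.1 q.2) ∂p) '' P k h (πb k h))
      else
        sInf ((fun p : Measure (ℝ × X (k + 1)) =>
            ∫ q, (q.1 + rVal πb π fuel (k + 1) (concat k h (-(πb k h)) q.1 q.2)) ∂p)
            '' P k h (-(πb k h)))
          - sSup ((fun p : Measure (ℝ × X (k + 1)) => ∫ q, q.1 ∂p) '' P k h (πb k h))

/-- Relative value function `V^{π/π^b}_k` in a `K`-stage problem (stages `k = 0, …, K-1`). -/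
noncomputable def rV (K : ℕ) (πb π : ∀ k, H k → ℝ) (k : ℕ) (h : H k) : ℝ :=
  rVal X H concat P πb π (K - k) k h

open Classical in
/-- Relative `Q`-function `Q^{π/π^b}_k(h⃗_k, a)`. -/
noncomputable def rQ (K : ℕ) (πb π : ∀ k, H k → ℝ) (k : ℕ) (h : H k) (a : ℝ) : ℝ :=
  if a = πb k h then
    sInf ((fun p : Measure (ℝ × X (k + 1)) =>
        ∫ q, rV X H concat P K πb π (k + 1) (concat k h (πb k h) q.1 q.2) ∂p)
        '' P k h (πb k h))
  else
    sInf ((fun p : Measure (ℝ × X (k + 1)) =>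
        ∫ q, (q.1 + rV X H concat P K πb π (k + 1) (concat k h (-(πb k h)) q.1 q.2)) ∂p)
        '' P k h (-(πb k h)))
      - sSup ((fun p : Measure (ℝ × X (k + 1)) => ∫ q, q.1 ∂p) '' P k h (πb k h))

/-- Relative contrast `𝒞^{π/π^b}_k(h⃗_k)`
`= sup_{p'∈𝒫_{h⃗_k,a'_k}} ∫ r dp' + inf_{p∈𝒫_{h⃗_k,a'_k}} ∫ V^{π/π^b}_{k+1}(h⃗_k,a'_k,r,x) dp
   − inf_{p∈𝒫_{h⃗_k,−a'_k}} ∫ [r + V^{π/π^b}_{k+1}(h⃗_k,−a'_k,r,x)] dp`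
(at the final stage the middle term is `inf ∫ 0 dp = 0`, recovering the stage-`K` formula). -/
noncomputable def rC (K : ℕ) (πb π : ∀ k, H k → ℝ) (k : ℕ) (h : H k) : ℝ :=
  sSup ((fun p : Measure (ℝ × X (k + 1)) => ∫ q, q.1 ∂p) '' P k h (πb k h))
    + sInf ((fun p : Measure (ℝ × X (k + 1)) =>
        ∫ q, rV X H concat P K πb π (k + 1) (concat k h (πb k h) q.1 q.2) ∂p)
        '' P k h (πb k h))
    - sInf ((fun p : Measure (ℝ × X (k + 1)) =>
        ∫ q, (q.1 + rV X H concat P K πb π (k + 1) (concat k h (-(πb k h)) q.1 q.2)) ∂p)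
        '' P k h (-(πb k h)))

end DTR

/-
Backward induction on the stage. `V^{π/π^b}_k(h) = Q^{π/π^b}_k(h, π_k(h))`, and `Q^{π/π^b}_k(h, a)`
is monotone in `V^{π/π^b}_{k+1}`, since infima over `𝒫` of integrals are monotone in the
integrand. Hence `V^{π/π^b}_{k+1} ≤ V^{π↑/π^b}_{k+1}` gives
`V^{π/π^b}_k(h) ≤ Q^{π↑/π^b}_k(h, π_k(h)) ≤ Q^{π↑/π^b}_k(h, π↑_k(h)) = V^{π↑/π^b}_k(h)`,
the middle step being the greedy choice of `π↑`.
-/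

theorem csInf_image_le_csInf_image {β α : Type*} [ConditionallyCompleteLattice α]
    {s : Set β} {f g : β → α} (hs : s.Nonempty) (hf : BddBelow (f '' s))
    (hfg : ∀ x ∈ s, f x ≤ g x) : sInf (f '' s) ≤ sInf (g '' s) :=
  le_csInf (hs.image g) <| by
    rintro _ ⟨x, hx, rfl⟩
    exact (csInf_le hf ⟨x, hx, rfl⟩).trans (hfg x hx)

theorem csInf_integral_image_mono {α : Type*} [MeasurableSpace α] {S : Set (Measure α)}
    {f g : α → ℝ} (hS : S.Nonempty) (hbdd : BddBelow ((fun p => ∫ q, f q ∂p) '' S))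
    (hf : ∀ p ∈ S, Integrable f p) (hg : ∀ p ∈ S, Integrable g p) (hfg : f ≤ g) :
    sInf ((fun p => ∫ q, f q ∂p) '' S) ≤ sInf ((fun p => ∫ q, g q ∂p) '' S) :=
  csInf_image_le_csInf_image hS hbdd fun p hp => integral_mono (hf p hp) (hg p hp) hfg

section RelativeValue

variable {X : ℕ → Type} [∀ k, MeasurableSpace (X k)] {H : ℕ → Type}
  {concat : ∀ k, H k → ℝ → ℝ → X (k + 1) → H (k + 1)}
  {P : ∀ k, H k → ℝ → Set (Measure (ℝ × X (k + 1)))} {K : ℕ} {πb : ∀ k, H k → ℝ}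

theorem rV_of_le (π : ∀ k, H k → ℝ) {k : ℕ} (hk : K ≤ k) (h : H k) :
    rV X H concat P K πb π k h = 0 := by
  rw [rV, Nat.sub_eq_zero_of_le hk, rVal]

theorem rV_eq_rQ (π : ∀ k, H k → ℝ) {k : ℕ} (hk : k < K) (h : H k) :
    rV X H concat P K πb π k h = rQ X H concat P K πb π k h (π k h) := by
  obtain ⟨n, hn⟩ : ∃ n, K - k = n + 1 := ⟨K - k - 1, by omega⟩
  have hn' : K - (k + 1) = n := by omega
  simp only [rV, rQ, hn, hn', rVal]

theorem rQ_mono {π π' : ∀ k, H k → ℝ} {k : ℕ} {h : H k}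
    (hne : (P k h (πb k h)).Nonempty) (hne' : (P k h (-(πb k h))).Nonempty)
    (hIntR : ∀ a, ∀ p ∈ P k h a, Integrable (fun q : ℝ × X (k + 1) => q.1) p)
    (hIntV : ∀ a, ∀ p ∈ P k h a, Integrable (fun q : ℝ × X (k + 1) =>
      rV X H concat P K πb π (k + 1) (concat k h a q.1 q.2)) p)
    (hIntV' : ∀ a, ∀ p ∈ P k h a, Integrable (fun q : ℝ × X (k + 1) =>
      rV X H concat P K πb π' (k + 1) (concat k h a q.1 q.2)) p)
    (hBdd : ∀ a,
      BddBelow ((fun p : Measure (ℝ × X (k + 1)) =>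
          ∫ q, (q.1 + rV X H concat P K πb π (k + 1) (concat k h a q.1 q.2)) ∂p) '' P k h a)
      ∧ BddBelow ((fun p : Measure (ℝ × X (k + 1)) =>
          ∫ q, rV X H concat P K πb π (k + 1) (concat k h a q.1 q.2) ∂p) '' P k h a))
    (hV : ∀ h' : H (k + 1),
      rV X H concat P K πb π (k + 1) h' ≤ rV X H concat P K πb π' (k + 1) h') (a : ℝ) :
    rQ X H concat P K πb π k h a ≤ rQ X H concat P K πb π' k h a := by
  unfold rQ
  split_ifs
  · exact csInf_integral_image_mono hne (hBdd _).2 (hIntV _) (hIntV' _) fun q => hV _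
  · refine sub_le_sub_right (csInf_integral_image_mono hne' (hBdd _).1
      (fun p hp => (hIntR _ p hp).add (hIntV _ p hp))
      (fun p hp => (hIntR _ p hp).add (hIntV' _ p hp)) fun q => ?_) _
    exact add_le_add_right (hV _) _

end RelativeValue

theorem dynamic_programming_IV_improved_DTR_general
    (X : ℕ → Type) [∀ k, MeasurableSpace (X k)] (H : ℕ → Type)
    (concat : ∀ k, H k → ℝ → ℝ → X (k + 1) → H (k + 1))
    (P : ∀ k, H k → ℝ → Set (Measure (ℝ × X (k + 1))))
    (K : ℕ)
    (hPne : ∀ k (h : H k) (a : ℝ), a = 1 ∨ a = -1 → (P k h a).Nonempty)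
    (hIntR : ∀ k (h : H k) (a : ℝ), ∀ p ∈ P k h a,
      Integrable (fun q : ℝ × X (k + 1) => q.1) p)
    (hIntV : ∀ (πb π : ∀ k, H k → ℝ) k (h : H k) (a : ℝ), ∀ p ∈ P k h a,
      Integrable (fun q : ℝ × X (k + 1) =>
        rV X H concat P K πb π (k + 1) (concat k h a q.1 q.2)) p)
    (hBddB : ∀ (πb π : ∀ k, H k → ℝ) k (h : H k) (a : ℝ),
      BddBelow ((fun p : Measure (ℝ × X (k + 1)) =>
          ∫ q, (q.1 + rV X H concat P K πb π (k + 1) (concat k h a q.1 q.2)) ∂p) '' P k h a)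
      ∧ BddBelow ((fun p : Measure (ℝ × X (k + 1)) =>
          ∫ q, rV X H concat P K πb π (k + 1) (concat k h a q.1 q.2) ∂p) '' P k h a))
    (πb : ∀ k, H k → ℝ) (hπb : ∀ k (h : H k), πb k h = 1 ∨ πb k h = -1)
    (πup : ∀ k, H k → ℝ)
    (hπup_argmax : ∀ k, k < K → ∀ h : H k, ∀ a : ℝ, a = 1 ∨ a = -1 →
      rQ X H concat P K πb πup k h a ≤ rQ X H concat P K πb πup k h (πup k h)) :
    ∀ k, k < K → ∀ h : H k, ∀ π : ∀ j, H j → ℝ,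
      (∀ j (hj : H j), π j hj = 1 ∨ π j hj = -1) →
      rV X H concat P K πb π k h ≤ rV X H concat P K πb πup k h := by
  intro k hk h π hπ
  have hne : ∀ k (h : H k), (P k h (πb k h)).Nonempty ∧ (P k h (-(πb k h))).Nonempty :=
    fun k h => by
      rcases hπb k h with hb | hb <;> rw [hb] <;> simp [hPne]
  replace hk := hk.le
  induction hk using Nat.decreasingInduction with
  | self => rw [rV_of_le π le_rfl, rV_of_le πup le_rfl]
  | of_succ k hk ih =>
    calc rV X H concat P K πb π k h
        = rQ X H concat P K πb π k h (π k h) := rV_eq_rQ π hk h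
      _ ≤ rQ X H concat P K πb πup k h (π k h) :=
          rQ_mono (hne k h).1 (hne k h).2 (hIntR k h) (hIntV πb π k h) (hIntV πb πup k h)
            (hBddB πb π k h) ih _
      _ ≤ rQ X H concat P K πb πup k h (πup k h) := hπup_argmax k hk h (π k h) (hπ k h)
      _ = rV X H concat P K πb πup k h := (rV_eq_rQ πup hk h).symm

/-- Theorem 2 (dynamic programming for the IV-improved DTR): if the DTR `π↑` is obtained by
backward induction, i.e. at every stage `k` and history `h⃗_k` the action `π↑_k(h⃗_k)`
maximizes the relative `Q`-function `Q^{π↑/π^b}_k(h⃗_k, ·)` over `a ∈ {−1,+1}`, then `π↑`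
maximizes the relative value function `V^{π/π^b}_k(h⃗_k)` at every stage `k` and every
history `h⃗_k`, over all (Boolean) DTRs `π`. -/
theorem dynamic_programming_IV_improved_DTR
    (X : ℕ → Type) [∀ k, MeasurableSpace (X k)] (H : ℕ → Type)
    (concat : ∀ k, H k → ℝ → ℝ → X (k + 1) → H (k + 1))
    (P : ∀ k, H k → ℝ → Set (Measure (ℝ × X (k + 1))))
    (K : ℕ) (hK : 1 ≤ K)
    (hPne : ∀ k (h : H k) (a : ℝ), a = 1 ∨ a = -1 → (P k h a).Nonempty)
    (hPprob : ∀ k (h : H k) (a : ℝ), ∀ p ∈ P k h a, IsProbabilityMeasure p)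
    (hIntR : ∀ k (h : H k) (a : ℝ), ∀ p ∈ P k h a,
      Integrable (fun q : ℝ × X (k + 1) => q.1) p)
    (hIntV : ∀ (πb π : ∀ k, H k → ℝ) k (h : H k) (a : ℝ), ∀ p ∈ P k h a,
      Integrable (fun q : ℝ × X (k + 1) =>
        rV X H concat P K πb π (k + 1) (concat k h a q.1 q.2)) p)
    (hBddB : ∀ (πb π : ∀ k, H k → ℝ) k (h : H k) (a : ℝ),
      BddBelow ((fun p : Measure (ℝ × X (k + 1)) =>
          ∫ q, (q.1 + rV X H concat P K πb π (k + 1) (concat k h a q.1 q.2)) ∂p) '' P k h a)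
      ∧ BddBelow ((fun p : Measure (ℝ × X (k + 1)) =>
          ∫ q, rV X H concat P K πb π (k + 1) (concat k h a q.1 q.2) ∂p) '' P k h a))
    (hBddA : ∀ k (h : H k) (a : ℝ),
      BddAbove ((fun p : Measure (ℝ × X (k + 1)) => ∫ q, q.1 ∂p) '' P k h a))
    (πb : ∀ k, H k → ℝ) (hπb : ∀ k (h : H k), πb k h = 1 ∨ πb k h = -1)
    (πup : ∀ k, H k → ℝ)
    (hπup_pm : ∀ k (h : H k), πup k h = 1 ∨ πup k h = -1)
    (hπup_argmax : ∀ k, k < K → ∀ h : H k, ∀ a : ℝ, a = 1 ∨ a = -1 →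
      rQ X H concat P K πb πup k h a ≤ rQ X H concat P K πb πup k h (πup k h)) :
    ∀ k, k < K → ∀ h : H k, ∀ π : ∀ j, H j → ℝ,
      (∀ j (hj : H j), π j hj = 1 ∨ π j hj = -1) →
      rV X H concat P K πb π k h ≤ rV X H concat P K πb πup k h :=
  dynamic_programming_IV_improved_DTR_general X H concat P K hPne hIntR hIntV hBddB πb hπb πup
    hπup_argmax
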